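/- Let M be a rank-r paving matroid with n elements, r \ge 2, whose set of hyperplanes (which forms an (r-1)-partition of the ground set) has exactly b_k blocks of cardinality k for each k. Writing T_M(x,y) = \sum_{i,j} t_{ij} x^i y^j, the coefficients satisfy: t_{i0} = \binom{n-i-1}{r-i} for all i \ge 2; t_{10} = \sum_{k \ge 0} \binom{r-2+k}{r-2} b_{k+r-1} + \binom{n-2}{r-1} - \binom{n}{r-1}; and for all j > 0, t_{1j} = \sum_{k \ge 0} \binom{r-2+k}{r-2} b_{k+j+r-1} and t_{0j} = \binom{n-j-1}{r-1} - \sum_{k \ge 0} \binom{r-1+k}{r-1} b_{k+j+r-1}. -/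

import Mathlib

/-! In a paving matroid of rank `r` every set of fewer than `r` elements is independent, and a
set of at least `r - 1` elements has rank `r - 1` exactly when it lies in a hyperplane, which is
then unique. Grouping the subsets in the rank expansion of `T_M` by cardinality therefore writes
`T_M` as the Tutte polynomial of the uniform matroid `U_{r,n}` plus, for each hyperplane `H` and
each `a ≥ r`, `C(|H|, a)` copies of `(x-1)(y-1)^(a-r+1) - (y-1)^(a-r)`. Extracting coefficients
leaves sums `∑ C(N, a) [x^i] (x-1)^p`, which are the Chu–Vandermonde identity with the negative
upper index `-(i+1)`. The sums over hyperplanes are regrouped by size into the `b_k`, and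
`∑_H C(|H|, r-1) = C(n, r-1)` because every `(r-1)`-set lies in exactly one hyperplane. -/

open MvPolynomial Finset
open scoped Matroid

namespace TuttePaper

open Classical

variable {α : Type*}

/-- The rank of a set in a matroid: the maximum cardinality of an independent subset. -/
noncomputable def rk (M : Matroid α) (A : Set α) : ℕ :=
  sSup {n | ∃ I, M.Indep I ∧ I ⊆ A ∧ I.ncard = n}

/-- The Tutte polynomial of a matroid with finite ground set, as an element of ℤ[x,y];
the variable `X 0` plays the role of `x` and `X 1` that of `y`:
`T_M(x,y) = ∑_{A ⊆ E} (x-1)^(r(E)-r(A)) (y-1)^(|A|-r(A))`. -/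
noncomputable def tutte (M : Matroid α) : MvPolynomial (Fin 2) ℤ :=
  if hE : M.E.Finite then
    ∑ A ∈ hE.toFinset.powerset,
      (X 0 - 1) ^ (rk M M.E - rk M ↑A) * (X 1 - 1) ^ (A.card - rk M ↑A)
  else 0

/-- The Tutte polynomial with `x` evaluated at `1`, i.e. `T_M(1,y)`, as an element of ℤ[x,y]. -/
noncomputable def tutteX1 (M : Matroid α) : MvPolynomial (Fin 2) ℤ :=
  eval₂ C (fun i => if i = 0 then 1 else X 1) (tutte M)

/-- A loop of a matroid: an element whose singleton has rank zero. -/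
def IsLoop (M : Matroid α) (e : α) : Prop := rk M {e} = 0

/-- A coloop of a matroid: an element contained in every basis. -/
def IsColoop (M : Matroid α) (e : α) : Prop := ∀ B, M.IsBase B → e ∈ B

/-- A circuit of a matroid: a minimal dependent set. -/
def IsCircuit (M : Matroid α) (C : Set α) : Prop :=
  C ⊆ M.E ∧ ¬ M.Indep C ∧ ∀ D ⊂ C, M.Indep D

/-- A hyperplane of a matroid: a flat of rank `r(M) - 1`. -/
def IsHyperplane (M : Matroid α) (H : Set α) : Prop :=
  M.IsFlat H ∧ rk M H + 1 = rk M M.E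

/-- Deletion of a set of elements from a matroid. -/
def deleteSet (M : Matroid α) (D : Set α) : Matroid α := M ↾ (M.E \ D)

/-- Contraction of a set of elements in a matroid, `M/C = (M✶ \ C)✶`. -/
def contractSet (M : Matroid α) (C : Set α) : Matroid α := ((M✶) ↾ (M.E \ C))✶

/-- Deletion of a single element. -/
def deleteElem (M : Matroid α) (e : α) : Matroid α := deleteSet M {e}

/-- Contraction of a single element. -/
def contractElem (M : Matroid α) (e : α) : Matroid α := contractSet M {e}

/-- A matroid is paving if every circuit has size at least the rank of the matroid. -/
def Paving (M : Matroid α) : Prop := ∀ C, IsCircuit M C → rk M M.E ≤ C.ncard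

/-- A matroid is sparse paving if it is paving and any two distinct circuits of size `r(M)`
have symmetric difference of size greater than two. -/
def SparsePaving (M : Matroid α) : Prop :=
  Paving M ∧ ∀ C₁ C₂, IsCircuit M C₁ → IsCircuit M C₂ →
    C₁.ncard = rk M M.E → C₂.ncard = rk M M.E → C₁ ≠ C₂ → 2 < (symmDiff C₁ C₂).ncard

/-- An `m`-partition of a set `E`: a collection of at least two subsets of `E`, each with at
least `m` elements, such that every `m`-element subset of `E` is contained in exactly one
member of the collection. -/
def IsMPartition (m : ℕ) (E : Set α) (T : Set (Set α)) : Prop :=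
  1 < T.ncard ∧ (∀ B ∈ T, B ⊆ E ∧ m ≤ B.ncard) ∧
    ∀ S ⊆ E, S.ncard = m → ∃! B, B ∈ T ∧ S ⊆ B

/-- `tcoef M i j` is the coefficient `t_{ij}` of `x^i y^j` in the Tutte polynomial of `M`. -/
noncomputable def tcoef (M : Matroid α) (i j : ℕ) : ℤ :=
  MvPolynomial.coeff (Finsupp.single (0 : Fin 2) i + Finsupp.single (1 : Fin 2) j) (tutte M)

/-- The characteristic polynomial `χ_N(λ) = ∑_{A ⊆ E} (-1)^{|A|} λ^{r(E)-r(A)}` of a matroid,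
evaluated at an element `l` of a commutative ring. -/
noncomputable def charEval {R : Type*} [CommRing R] (N : Matroid α) (l : R) : R :=
  if hE : N.E.Finite then
    ∑ A ∈ hE.toFinset.powerset, (-1 : R) ^ A.card * l ^ (rk N N.E - rk N ↑A)
  else 0

/-- Crapo's coboundary polynomial `χ̄_M(λ,t) = ∑_{X flat of M} t^{|X|} χ_{M/X}(λ)`,
evaluated at elements `l`, `t` of a commutative ring. -/
noncomputable def cobEval {R : Type*} [CommRing R] (M : Matroid α) (l t : R) : R :=
  if hE : M.E.Finite then
    (hE.toFinset.powerset.filter (fun F : Finset α => M.IsFlat ↑F)).sum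
      (fun F => t ^ F.card * charEval (contractSet M ↑F) l)
  else 0

def subOnePowCoeff (p i : ℕ) : ℤ := (-1) ^ (p + i) * p.choose i

lemma subOnePowCoeff_eq_zero_of_lt {p i : ℕ} (h : p < i) : subOnePowCoeff p i = 0 := by
  simp [subOnePowCoeff, Nat.choose_eq_zero_of_lt h]

lemma subOnePowCoeff_self (p : ℕ) : subOnePowCoeff p p = 1 := by
  simp [subOnePowCoeff, ← two_mul, pow_mul]

lemma subOnePowCoeff_one_zero : subOnePowCoeff 1 0 = -1 := by
  simp [subOnePowCoeff]

lemma subOnePowCoeff_add_left_self (i u : ℕ) :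
    subOnePowCoeff (i + u) i = Ring.choose (-(i + 1 : ℤ)) u := by
  rw [Ring.choose_neg, Units.smul_def, Int.coe_negOnePow_natCast, smul_eq_mul,
    show (i + 1 : ℤ) + u - 1 = ((i + u : ℕ) : ℤ) by push_cast; ring, Ring.choose_natCast,
    subOnePowCoeff, Nat.choose_symm_add, show i + u + i = u + 2 * i by ring, pow_add, pow_mul]
  simp

lemma subOnePowCoeff_succ_add (k j : ℕ) :
    subOnePowCoeff (k + 1) (j + 1) + subOnePowCoeff k (j + 1) = subOnePowCoeff k j := by
  simp only [subOnePowCoeff, Nat.choose_succ_succ']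
  push_cast
  ring

lemma sum_range_choose_mul_subOnePowCoeff {n m i : ℕ} (hm : m ≤ n) :
    ∑ a ∈ range (m + 1), (n.choose a : ℤ) * subOnePowCoeff (m - a) i =
      if i ≤ m then ((n - i - 1).choose (m - i) : ℤ) else 0 := by
  split_ifs with him
  · obtain ⟨K, rfl⟩ := Nat.exists_eq_add_of_le him
    rw [← sum_subset (range_subset_range.2 (by omega : K + 1 ≤ i + K + 1)) fun a ha ha' => by
      rw [subOnePowCoeff_eq_zero_of_lt (by simp only [mem_range] at ha ha'; omega), mul_zero]]
    have hterm : ∀ a ∈ range (K + 1), (n.choose a : ℤ) * subOnePowCoeff (i + K - a) i =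
        Ring.choose (n : ℤ) a * Ring.choose (-(i + 1 : ℤ)) (K - a) := by
      intro a ha
      rw [Ring.choose_natCast, ← subOnePowCoeff_add_left_self, show i + K - a = i + (K - a) by
        rw [mem_range] at ha; omega]
    rw [sum_congr rfl hterm, ← Nat.sum_antidiagonal_eq_sum_range_succ
      (fun a u => Ring.choose (n : ℤ) a * Ring.choose (-(i + 1 : ℤ)) u), ← Ring.add_choose_eq _
      (Commute.all _ _), Nat.add_sub_cancel_left]
    -- the upper index `n - i - 1` is negative when `K = 0` and `i = n`
    rcases Nat.eq_zero_or_pos K with rfl | hK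
    · simp
    · rw [show (n : ℤ) + -(i + 1) = ((n - i - 1 : ℕ) : ℤ) by omega,
        Ring.choose_natCast]
  · exact sum_eq_zero fun a ha => by
      rw [subOnePowCoeff_eq_zero_of_lt (by rw [mem_range] at ha; omega), mul_zero]

lemma sum_range_choose_mul_subOnePowCoeff_of_pos {n m i : ℕ} (hi : 0 < i) (hm : m ≤ n) :
    ∑ a ∈ range m, (n.choose a : ℤ) * subOnePowCoeff (m - a) i =
      if i ≤ m then ((n - i - 1).choose (m - i) : ℤ) else 0 := by
  rw [← sum_range_choose_mul_subOnePowCoeff hm, sum_range_succ, Nat.sub_self,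
    subOnePowCoeff_eq_zero_of_lt hi, mul_zero, add_zero]

lemma sum_range_choose_add_mul_subOnePowCoeff {N ρ m j : ℕ} (hρ : 0 < ρ) (hm : N < ρ + m) :
    ∑ k ∈ range m, (N.choose (ρ + k) : ℤ) * subOnePowCoeff k j =
      if ρ + j ≤ N then ((N - j - 1).choose (ρ - 1) : ℤ) else 0 := by
  by_cases hρN : ρ ≤ N
  · obtain ⟨K, rfl⟩ := Nat.exists_eq_add_of_le hρN
    rw [← sum_subset (range_subset_range.2 (by omega : K + 1 ≤ m)) fun k _ hk => by
      rw [Nat.choose_eq_zero_of_lt (by rw [mem_range] at hk; omega), Nat.cast_zero, zero_mul],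
      ← sum_range_reflect]
    have hterm : ∀ a ∈ range (K + 1), ((ρ + K).choose (ρ + (K + 1 - 1 - a)) : ℤ) *
        subOnePowCoeff (K + 1 - 1 - a) j = ((ρ + K).choose a : ℤ) * subOnePowCoeff (K - a) j := by
      intro a ha
      rw [Nat.add_sub_cancel,
        Nat.choose_symm_of_eq_add (show ρ + K = ρ + (K - a) + a by rw [mem_range] at ha; omega)]
    rw [sum_congr rfl hterm, sum_range_choose_mul_subOnePowCoeff (by omega)]
    by_cases hj : j ≤ K
    · rw [if_pos hj, if_pos (by omega),
        Nat.choose_symm_of_eq_add (show ρ + K - j - 1 = K - j + (ρ - 1) by omega)]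
    · rw [if_neg hj, if_neg (by omega)]
  · rw [if_neg (by omega)]
    exact sum_eq_zero fun k _ => by
      rw [Nat.choose_eq_zero_of_lt (by omega), Nat.cast_zero, zero_mul]

lemma sum_range_choose_add_mul_subOnePowCoeff_succ {N r m j : ℕ} (hr : 1 < r) (hm : N < r + m) :
    ∑ k ∈ range m, (N.choose (r + k) : ℤ) * subOnePowCoeff (k + 1) j =
      (if r - 1 + j ≤ N then ((N - j - 1).choose (r - 2) : ℤ) else 0) -
        N.choose (r - 1) * subOnePowCoeff 0 j := by
  have h := sum_range_choose_add_mul_subOnePowCoeff (N := N) (ρ := r - 1) (m := m + 1) (j := j)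
    (by omega) (by omega)
  rw [sum_range_succ', show r - 1 - 1 = r - 2 by omega] at h
  simp only [show ∀ k, r - 1 + (k + 1) = r + k from fun k => by omega, add_zero] at h
  rw [← h, add_sub_cancel_right]

lemma X_sub_one_pow_eq_sum (v : Fin 2) (p : ℕ) : (X v - 1 : MvPolynomial (Fin 2) ℤ) ^ p =
    ∑ k ∈ range (p + 1), monomial (Finsupp.single v k) (subOnePowCoeff p k) := by
  rw [sub_pow]
  refine sum_congr rfl fun k _ => ?_
  rw [one_pow, mul_one, X_pow_eq_monomial, subOnePowCoeff, add_comm k]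
  simp only [monomial_eq, C_mul, map_pow, map_neg, map_one, map_natCast]
  ring

lemma single_add_single_eq_iff {k l i j : ℕ} :
    Finsupp.single (0 : Fin 2) k + Finsupp.single 1 l = Finsupp.single 0 i + Finsupp.single 1 j ↔
      k = i ∧ l = j := by
  refine ⟨fun h => ⟨?_, ?_⟩, fun h => h.1 ▸ h.2 ▸ rfl⟩
  · simpa using DFunLike.congr_fun h 0
  · simpa using DFunLike.congr_fun h 1

lemma coeff_X_sub_one_pow_mul_X_sub_one_pow (p q i j : ℕ) :
    coeff (Finsupp.single 0 i + Finsupp.single 1 j)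
      ((X 0 - 1 : MvPolynomial (Fin 2) ℤ) ^ p * (X 1 - 1) ^ q) =
      subOnePowCoeff p i * subOnePowCoeff q j := by
  rw [X_sub_one_pow_eq_sum, X_sub_one_pow_eq_sum, sum_mul_sum]
  simp only [monomial_mul, coeff_sum, coeff_monomial, single_add_single_eq_iff, ite_and]
  simp only [sum_ite_irrel, sum_ite_eq', mem_range, Order.lt_add_one_iff, sum_const_zero]
  split_ifs <;> simp_all [subOnePowCoeff_eq_zero_of_lt]

lemma sum_range_mul_card_filter_eq {β : Type*} (s : Finset β) (g : β → ℕ) (ψ : ℕ → ℤ)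
    {n d : ℕ} (hs : ∀ x ∈ s, g x ≤ n + d) :
    ∑ k ∈ range (n + 1), ψ k * #{x ∈ s | g x = k + d} =
      ∑ x ∈ s, if d ≤ g x then ψ (g x - d) else 0 := by
  have hcond : ∀ x k, (g x = k + d) ↔ (d ≤ g x ∧ k = g x - d) := fun x k => by omega
  simp only [card_filter, Nat.cast_sum, mul_sum, Nat.cast_ite, Nat.cast_one, Nat.cast_zero,
    mul_ite, mul_one, mul_zero]
  rw [sum_comm]
  refine sum_congr rfl fun x hx => ?_
  simp only [hcond, ite_and, sum_ite_irrel, sum_ite_eq', mem_range, sum_const_zero]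
  have := hs x hx
  split_ifs <;> first | rfl | omega

section Matroid

variable {M : Matroid α} {A H : Set α}

lemma natCast_rk (hE : M.E.Finite) (A : Set α) : (rk M A : ℕ∞) = M.eRk A := by
  obtain ⟨I, hI⟩ := M.exists_isBasis' A
  have hfin : ∀ {J : Set α}, M.Indep J → J.Finite := fun hJ => hE.subset hJ.subset_ground
  have hle : ∀ n ∈ {n | ∃ J, M.Indep J ∧ J ⊆ A ∧ J.ncard = n}, n ≤ I.ncard := by
    rintro _ ⟨J, hJ, hJA, rfl⟩
    have := hJ.encard_le_eRk_of_subset hJA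
    rw [← hI.encard_eq_eRk, ← (hfin hJ).cast_ncard_eq, ← (hfin hI.indep).cast_ncard_eq] at this
    exact_mod_cast this
  have hrk : rk M A = I.ncard :=
    le_antisymm (csSup_le ⟨_, I, hI.indep, hI.subset, rfl⟩ hle)
      (le_csSup ⟨_, hle⟩ ⟨I, hI.indep, hI.subset, rfl⟩)
  rw [hrk, (hfin hI.indep).cast_ncard_eq, hI.encard_eq_eRk]

lemma rk_mono (hE : M.E.Finite) {A B : Set α} (h : A ⊆ B) : rk M A ≤ rk M B := by
  have := M.eRk_mono h
  rwa [← natCast_rk hE, ← natCast_rk hE, Nat.cast_le] at this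

lemma _root_.Matroid.Indep.rk_eq_ncard (hE : M.E.Finite) {I : Set α} (hI : M.Indep I) :
    rk M I = I.ncard := by
  have := hI.eRk_eq_encard
  rwa [← natCast_rk hE, ← (hE.subset hI.subset_ground).cast_ncard_eq, Nat.cast_inj] at this

lemma rk_le_ncard (hE : M.E.Finite) (hA : A.Finite) : rk M A ≤ A.ncard := by
  have := M.eRk_le_encard A
  rwa [← natCast_rk hE, ← hA.cast_ncard_eq, Nat.cast_le] at this

lemma rk_closure (hE : M.E.Finite) (A : Set α) : rk M (M.closure A) = rk M A := by
  have := M.eRk_closure_eq A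
  rwa [← natCast_rk hE, ← natCast_rk hE, Nat.cast_inj] at this

lemma IsHyperplane.eq_closure_of_subset (hE : M.E.Finite) (hH : IsHyperplane M H) (hAH : A ⊆ H)
    (h : rk M H ≤ rk M A) : H = M.closure A := by
  have hA : A.Finite := hE.subset (hAH.trans hH.1.subset_ground)
  rw [← hH.1.closure]
  refine ((M.isRkFinite_of_finite hA).closure_eq_closure_of_subset_of_eRk_ge_eRk hAH ?_).symm
  rwa [← natCast_rk hE, ← natCast_rk hE, Nat.cast_le]

lemma isHyperplane_closure (hE : M.E.Finite) (h : rk M A + 1 = rk M M.E) :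
    IsHyperplane M (M.closure A) :=
  ⟨M.isFlat_closure A, by rw [rk_closure hE, h]⟩

lemma Paving.indep_of_ncard_lt (hE : M.E.Finite) (hpav : Paving M) (hA : A ⊆ M.E)
    (h : A.ncard < rk M M.E) : M.Indep A := by
  by_contra hind
  obtain ⟨C, hCA, hC⟩ := Matroid.Dep.exists_isCircuit_subset ⟨hind, hA⟩
  have := hpav C ⟨hC.subset_ground, hC.not_indep, fun D hD => hC.ssubset_indep hD⟩
  have := Set.ncard_le_ncard hCA (hE.subset hA)
  omega

lemma Paving.sub_one_le_rk (hE : M.E.Finite) (hpav : Paving M) (hA : A ⊆ M.E)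
    (h : rk M M.E - 1 ≤ A.ncard) : rk M M.E - 1 ≤ rk M A := by
  obtain ⟨S, hSA, hS⟩ := Set.exists_subset_card_eq h
  rcases Nat.eq_zero_or_pos (rk M M.E) with h0 | h0
  · omega
  rw [← hS, ← (hpav.indep_of_ncard_lt hE (hSA.trans hA) (by omega)).rk_eq_ncard hE]
  exact rk_mono hE hSA

lemma Paving.rk_eq_ite (hE : M.E.Finite) (hpav : Paving M) (hA : A ⊆ M.E)
    (h : rk M M.E - 1 ≤ A.ncard) :
    rk M A = if ∃ H, IsHyperplane M H ∧ A ⊆ H then rk M M.E - 1 else rk M M.E := by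
  have hlow := hpav.sub_one_le_rk hE hA h
  have hup := rk_mono hE hA
  split_ifs with hH
  · obtain ⟨H, hH, hAH⟩ := hH
    have := rk_mono hE hAH
    have := hH.2
    omega
  · by_contra hne
    exact hH ⟨_, isHyperplane_closure hE (by omega), M.subset_closure A hA⟩

lemma Paving.eq_of_subset_isHyperplane (hE : M.E.Finite) (hpav : Paving M) {H₁ H₂ : Set α}
    (h₁ : IsHyperplane M H₁) (h₂ : IsHyperplane M H₂) (hA₁ : A ⊆ H₁) (hA₂ : A ⊆ H₂)
    (h : rk M M.E - 1 ≤ A.ncard) : H₁ = H₂ := by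
  have hrk := hpav.sub_one_le_rk hE (hA₁.trans h₁.1.subset_ground) h
  have := h₁.2
  have := h₂.2
  rw [h₁.eq_closure_of_subset hE hA₁ (by omega), h₂.eq_closure_of_subset hE hA₂ (by omega)]

end Matroid

noncomputable def hyperplaneFinset (M : Matroid α) (hE : M.E.Finite) : Finset (Finset α) :=
  hE.toFinset.powerset.filter fun H => IsHyperplane M ↑H

section Counting

variable {M : Matroid α} {r n : ℕ}

lemma mem_hyperplaneFinset (hE : M.E.Finite) {H : Finset α} :
    H ∈ hyperplaneFinset M hE ↔ IsHyperplane M ↑H := by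
  rw [hyperplaneFinset, mem_filter, mem_powerset, and_iff_right_iff_imp, ← coe_subset,
    hE.coe_toFinset]
  exact fun h => h.1.subset_ground

lemma ncard_setOf_isHyperplane (hE : M.E.Finite) (k : ℕ) :
    {H : Set α | IsHyperplane M H ∧ H.ncard = k}.ncard =
      #{H ∈ hyperplaneFinset M hE | #H = k} := by
  have hset : {H : Set α | IsHyperplane M H ∧ H.ncard = k} =
      (↑) '' (↑{H ∈ hyperplaneFinset M hE | #H = k} : Set (Finset α)) := by
    ext H
    simp only [Set.mem_ofPred_eq, Set.mem_image, coe_filter, mem_hyperplaneFinset hE]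
    refine ⟨fun ⟨hH, hk⟩ => ⟨(hE.subset hH.1.subset_ground).toFinset, ?_⟩, ?_⟩
    · simpa [← Set.ncard_eq_toFinset_card _ (hE.subset hH.1.subset_ground)] using ⟨hH, hk⟩
    · rintro ⟨H, ⟨hH, rfl⟩, rfl⟩
      exact ⟨hH, Set.ncard_coe_finset H⟩
  rw [hset, Set.ncard_image_of_injective _ coe_injective, Set.ncard_coe_finset]

lemma card_le_of_mem_hyperplaneFinset (hE : M.E.Finite) {H : Finset α}
    (hH : H ∈ hyperplaneFinset M hE) : #H ≤ M.E.ncard := by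
  rw [← Set.ncard_coe_finset]
  exact Set.ncard_le_ncard ((mem_hyperplaneFinset hE).1 hH).1.subset_ground hE

lemma Paving.card_filter_exists_isHyperplane {hE : M.E.Finite} (hpav : Paving M) {a : ℕ}
    (ha : rk M M.E - 1 ≤ a) :
    #{A ∈ hE.toFinset.powersetCard a | ∃ H, IsHyperplane M H ∧ ↑A ⊆ H} =
      ∑ H ∈ hyperplaneFinset M hE, (#H).choose a := by
  have hunion : {A ∈ hE.toFinset.powersetCard a | ∃ H, IsHyperplane M H ∧ ↑A ⊆ H} =
      (hyperplaneFinset M hE).biUnion (powersetCard a) := by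
    ext A
    simp only [mem_filter, mem_powersetCard, mem_biUnion, mem_hyperplaneFinset hE]
    constructor
    · rintro ⟨⟨-, hA⟩, H, hH, hAH⟩
      obtain ⟨Hf, rfl⟩ := (hE.subset hH.1.subset_ground).exists_finset_coe
      exact ⟨Hf, hH, coe_subset.1 hAH, hA⟩
    · rintro ⟨H, hH, hAH, hA⟩
      refine ⟨⟨hAH.trans ?_, hA⟩, H, hH, coe_subset.2 hAH⟩
      rw [← coe_subset, hE.coe_toFinset]
      exact hH.1.subset_ground
  rw [hunion, card_biUnion]
  · simp only [card_powersetCard]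
  intro H₁ h₁ H₂ h₂ hne
  refine disjoint_left.2 fun A hA₁ hA₂ => hne ?_
  rw [mem_powersetCard] at hA₁ hA₂
  rw [mem_coe, mem_hyperplaneFinset hE] at h₁ h₂
  exact coe_injective (hpav.eq_of_subset_isHyperplane hE h₁ h₂ (coe_subset.2 hA₁.1)
    (coe_subset.2 hA₂.1) (by rw [Set.ncard_coe_finset, hA₁.2]; exact ha))

lemma tcoef_eq_sum (hE : M.E.Finite) (i j : ℕ) :
    tcoef M i j = ∑ A ∈ hE.toFinset.powerset,
      subOnePowCoeff (rk M M.E - rk M ↑A) i * subOnePowCoeff (#A - rk M ↑A) j := by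
  simp only [tcoef, tutte, dif_pos hE, coeff_sum, coeff_X_sub_one_pow_mul_X_sub_one_pow]

lemma Paving.sum_powersetCard_rk_of_lt {hE : M.E.Finite} (hpav : Paving M) {G : Type*}
    [AddCommMonoid G] (f : ℕ → G) {a : ℕ} (ha : a < rk M M.E) :
    ∑ A ∈ hE.toFinset.powersetCard a, f (rk M ↑A) = (M.E.ncard).choose a • f a := by
  rw [Set.ncard_eq_toFinset_card M.E hE, ← sum_powersetCard]
  refine sum_congr rfl fun A hA => ?_
  rw [mem_powersetCard, ← coe_subset, hE.coe_toFinset] at hA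
  rw [(hpav.indep_of_ncard_lt hE hA.1 (by rwa [Set.ncard_coe_finset, hA.2])).rk_eq_ncard hE,
    Set.ncard_coe_finset]

lemma Paving.sum_powersetCard_rk {hE : M.E.Finite} (hpav : Paving M) {G : Type*} [AddCommGroup G]
    (f : ℕ → G) {a : ℕ} (ha : rk M M.E - 1 ≤ a) :
    ∑ A ∈ hE.toFinset.powersetCard a, f (rk M ↑A) = (M.E.ncard).choose a • f (rk M M.E) +
      ∑ H ∈ hyperplaneFinset M hE, (#H).choose a • (f (rk M M.E - 1) - f (rk M M.E)) := by
  have hterm : ∀ A ∈ hE.toFinset.powersetCard a, f (rk M ↑A) = f (rk M M.E) +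
      if ∃ H, IsHyperplane M H ∧ ↑A ⊆ H then f (rk M M.E - 1) - f (rk M M.E) else 0 := by
    intro A hA
    rw [mem_powersetCard, ← coe_subset, hE.coe_toFinset] at hA
    rw [hpav.rk_eq_ite hE hA.1 (by rwa [Set.ncard_coe_finset, hA.2])]
    split_ifs <;> abel
  rw [sum_congr rfl hterm, sum_add_distrib, sum_const, card_powersetCard, ← sum_filter, sum_const,
    hpav.card_filter_exists_isHyperplane ha, sum_smul, Set.ncard_eq_toFinset_card M.E hE]

lemma Paving.tcoef_eq (hE : M.E.Finite) (hpav : Paving M) (hr : rk M M.E = r) (hr0 : 0 < r)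
    (hn : M.E.ncard = n) (i j : ℕ) :
    tcoef M i j =
      ∑ a ∈ range r, (n.choose a : ℤ) * (subOnePowCoeff (r - a) i * subOnePowCoeff 0 j) +
      ∑ k ∈ range (n + 1 - r),
        (n.choose (r + k) : ℤ) * (subOnePowCoeff 0 i * subOnePowCoeff k j) +
      ∑ H ∈ hyperplaneFinset M hE, ∑ k ∈ range (n + 1 - r), ((#H).choose (r + k) : ℤ) *
        (subOnePowCoeff 1 i * subOnePowCoeff (k + 1) j -
          subOnePowCoeff 0 i * subOnePowCoeff k j) := by
  have hrn : r ≤ n := hr ▸ hn ▸ rk_le_ncard hE hE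
  set f : ℕ → ℕ → ℤ := fun a ρ => subOnePowCoeff (r - ρ) i * subOnePowCoeff (a - ρ) j
  have hcard : ∀ a, ∑ A ∈ hE.toFinset.powersetCard a,
      subOnePowCoeff (r - rk M ↑A) i * subOnePowCoeff (#A - rk M ↑A) j =
      ∑ A ∈ hE.toFinset.powersetCard a, f a (rk M ↑A) :=
    fun a => sum_congr rfl fun A hA => by rw [(mem_powersetCard.1 hA).2]
  obtain ⟨m, hm⟩ : ∃ m, n + 1 = r + m := ⟨n + 1 - r, by omega⟩
  rw [tcoef_eq_sum hE, sum_powerset, ← Set.ncard_eq_toFinset_card M.E hE, hn, hr,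
    sum_congr rfl fun a _ => hcard a, hm, sum_range_add, add_assoc, Nat.add_sub_cancel_left]
  congr 1
  · refine sum_congr rfl fun a ha => ?_
    rw [hpav.sum_powersetCard_rk_of_lt (f a) (hr ▸ mem_range.1 ha), hn, nsmul_eq_mul]
    simp only [f, Nat.sub_self]
  · rw [sum_congr rfl fun k _ =>
      hpav.sum_powersetCard_rk (f (r + k)) (by omega : rk M M.E - 1 ≤ r + k),
      sum_add_distrib, sum_comm]
    simp only [f, hr, hn, nsmul_eq_mul, Nat.sub_self, Nat.add_sub_cancel_left,
      show r - (r - 1) = 1 by omega, show ∀ k, r + k - (r - 1) = k + 1 from fun k => by omega]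

lemma Paving.sum_choose_card_hyperplaneFinset (hE : M.E.Finite) (hpav : Paving M)
    (hr : rk M M.E = r) (hr0 : 0 < r) (hn : M.E.ncard = n) :
    ∑ H ∈ hyperplaneFinset M hE, ((#H).choose (r - 1) : ℤ) = n.choose (r - 1) := by
  rw [← Nat.cast_sum, ← hr, ← hpav.card_filter_exists_isHyperplane le_rfl, filter_true_of_mem,
    card_powersetCard, ← Set.ncard_eq_toFinset_card M.E hE, hn]
  intro A hA
  rw [mem_powersetCard, ← coe_subset, hE.coe_toFinset] at hA
  have hrk := (hpav.indep_of_ncard_lt hE hA.1 (by rw [Set.ncard_coe_finset]; omega)).rk_eq_ncard hE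
  rw [Set.ncard_coe_finset] at hrk
  exact ⟨_, isHyperplane_closure hE (by omega), M.subset_closure _ hA.1⟩

lemma sum_mul_eq_sum_hyperplaneFinset (hE : M.E.Finite) (hn : M.E.ncard = n) {b : ℕ → ℕ}
    (hb : ∀ k, b k = {H : Set α | IsHyperplane M H ∧ H.ncard = k}.ncard) (ψ : ℕ → ℤ) (d : ℕ) :
    ∑ k ∈ range (n + 1), ψ k * b (k + d) =
      ∑ H ∈ hyperplaneFinset M hE, if d ≤ #H then ψ (#H - d) else 0 := by
  simp only [hb, ncard_setOf_isHyperplane hE]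
  exact sum_range_mul_card_filter_eq _ _ ψ fun H hH =>
    (hn ▸ card_le_of_mem_hyperplaneFinset hE hH).trans (Nat.le_add_right n d)

lemma Paving.tcoef_of_two_le (hE : M.E.Finite) (hpav : Paving M) (hr : rk M M.E = r)
    (hr0 : 0 < r) (hn : M.E.ncard = n) {i : ℕ} (hi : 2 ≤ i) :
    tcoef M i 0 = if i ≤ r then ((n - i - 1).choose (r - i) : ℤ) else 0 := by
  rw [hpav.tcoef_eq hE hr hr0 hn]
  simp only [subOnePowCoeff_eq_zero_of_lt (show 0 < i by omega),
    subOnePowCoeff_eq_zero_of_lt (show 1 < i by omega), subOnePowCoeff_self, mul_one, zero_mul,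
    sub_self, mul_zero, sum_const_zero, add_zero]
  exact sum_range_choose_mul_subOnePowCoeff_of_pos (by omega) (hr ▸ hn ▸ rk_le_ncard hE hE)

lemma Paving.tcoef_one_zero (hE : M.E.Finite) (hpav : Paving M) (hr : rk M M.E = r)
    (h2 : 2 ≤ r) (hn : M.E.ncard = n) {b : ℕ → ℕ}
    (hb : ∀ k, b k = {H : Set α | IsHyperplane M H ∧ H.ncard = k}.ncard) :
    tcoef M 1 0 = (∑ k ∈ range (n + 1), ((r - 2 + k).choose (r - 2) : ℤ) * b (k + r - 1))
        + ((n - 2).choose (r - 1) : ℤ) - (n.choose (r - 1) : ℤ) := by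
  have hrn : r ≤ n := hr ▸ hn ▸ rk_le_ncard hE hE
  rw [hpav.tcoef_eq hE hr (by omega) hn]
  simp only [subOnePowCoeff_eq_zero_of_lt zero_lt_one, subOnePowCoeff_self, mul_one, one_mul,
    zero_mul, sub_zero, mul_zero, sum_const_zero, add_zero]
  rw [sum_range_choose_mul_subOnePowCoeff_of_pos one_pos hrn, if_pos (by omega),
    sum_congr rfl fun H hH => sum_range_choose_add_mul_subOnePowCoeff_succ (by omega)
      (by have := card_le_of_mem_hyperplaneFinset hE hH; omega),
    ← hpav.sum_choose_card_hyperplaneFinset hE hr (by omega) hn]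
  simp only [show ∀ k, k + r - 1 = k + (r - 1) from fun k => by omega,
    sum_mul_eq_sum_hyperplaneFinset hE hn hb, subOnePowCoeff_self, mul_one, sum_sub_distrib,
    add_zero, Nat.sub_zero]
  have hmatch : ∑ H ∈ hyperplaneFinset M hE,
      (if r - 1 ≤ #H then ((#H - 1).choose (r - 2) : ℤ) else 0) =
      ∑ H ∈ hyperplaneFinset M hE,
        (if r - 1 ≤ #H then ((r - 2 + (#H - (r - 1))).choose (r - 2) : ℤ) else 0) :=
    sum_congr rfl fun H _ => by split_ifs <;> first | rfl | omega | (congr 2; omega)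
  rw [hmatch, show n - 1 - 1 = n - 2 by omega]
  ring

lemma Paving.tcoef_one_of_pos (hE : M.E.Finite) (hpav : Paving M) (hr : rk M M.E = r)
    (h2 : 2 ≤ r) (hn : M.E.ncard = n) {b : ℕ → ℕ}
    (hb : ∀ k, b k = {H : Set α | IsHyperplane M H ∧ H.ncard = k}.ncard) {j : ℕ} (hj : 0 < j) :
    tcoef M 1 j =
      ∑ k ∈ range (n + 1), ((r - 2 + k).choose (r - 2) : ℤ) * b (k + j + r - 1) := by
  rw [hpav.tcoef_eq hE hr (by omega) hn]
  simp only [subOnePowCoeff_eq_zero_of_lt hj, subOnePowCoeff_eq_zero_of_lt zero_lt_one,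
    subOnePowCoeff_self, one_mul, zero_mul, sub_zero, mul_zero, sum_const_zero, zero_add]
  rw [sum_congr rfl fun H hH => sum_range_choose_add_mul_subOnePowCoeff_succ (by omega)
      (by have := card_le_of_mem_hyperplaneFinset hE hH; omega)]
  simp only [show ∀ k, k + j + r - 1 = k + (j + r - 1) from fun k => by omega,
    sum_mul_eq_sum_hyperplaneFinset hE hn hb, subOnePowCoeff_eq_zero_of_lt hj, mul_zero, sub_zero]
  exact sum_congr rfl fun H _ => by split_ifs <;> first | rfl | omega | (congr 2; omega)

lemma Paving.tcoef_zero_of_pos (hE : M.E.Finite) (hpav : Paving M) (hr : rk M M.E = r)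
    (h2 : 2 ≤ r) (hn : M.E.ncard = n) {b : ℕ → ℕ}
    (hb : ∀ k, b k = {H : Set α | IsHyperplane M H ∧ H.ncard = k}.ncard) {j : ℕ} (hj : 0 < j) :
    tcoef M 0 j = ((n - j - 1).choose (r - 1) : ℤ)
        - ∑ k ∈ range (n + 1), ((r - 1 + k).choose (r - 1) : ℤ) * b (k + j + r - 1) := by
  obtain ⟨j, rfl⟩ : ∃ j', j = j' + 1 := ⟨j - 1, by omega⟩
  rw [hpav.tcoef_eq hE hr (by omega) hn]
  simp only [subOnePowCoeff_eq_zero_of_lt hj, subOnePowCoeff_self, subOnePowCoeff_one_zero,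
    one_mul, mul_zero, neg_mul, ← neg_add', subOnePowCoeff_succ_add, sum_const_zero, zero_add,
    mul_neg, sum_neg_distrib]
  rw [sum_range_choose_add_mul_subOnePowCoeff (by omega) (by omega),
    sum_congr rfl fun H hH => sum_range_choose_add_mul_subOnePowCoeff (by omega)
      (by have := card_le_of_mem_hyperplaneFinset hE hH; omega)]
  simp only [show ∀ k, k + (j + 1) + r - 1 = k + (j + r) from fun k => by omega,
    sum_mul_eq_sum_hyperplaneFinset hE hn hb, sub_eq_add_neg]
  congr 2
  · split_ifs
    · rfl
    · rw [Nat.choose_eq_zero_of_lt (by omega), Nat.cast_zero]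
  · exact sum_congr rfl fun H _ => by split_ifs <;> first | rfl | omega | (congr 2; omega)

end Counting

/-- Brylawski's formulas for the Tutte coefficients of a rank-`r` paving
matroid with `n` elements whose `(r-1)`-partition of hyperplanes has `b k` blocks of
cardinality `k`. -/
theorem tcoef_paving (M : Matroid α) (hE : M.E.Finite) (r n : ℕ)
    (hr : rk M M.E = r) (h2 : 2 ≤ r) (hn : M.E.ncard = n) (hpav : Paving M)
    (b : ℕ → ℕ) (hb : ∀ k, b k = {H : Set α | IsHyperplane M H ∧ H.ncard = k}.ncard) :
    (∀ i, 2 ≤ i → tcoef M i 0 =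
        if i ≤ r then ((n - i - 1).choose (r - i) : ℤ) else 0) ∧
    (tcoef M 1 0 = (∑ k ∈ range (n + 1), ((r - 2 + k).choose (r - 2) : ℤ) * b (k + r - 1))
        + ((n - 2).choose (r - 1) : ℤ) - (n.choose (r - 1) : ℤ)) ∧
    (∀ j, 0 < j → tcoef M 1 j =
        ∑ k ∈ range (n + 1), ((r - 2 + k).choose (r - 2) : ℤ) * b (k + j + r - 1)) ∧
    (∀ j, 0 < j → tcoef M 0 j = ((n - j - 1).choose (r - 1) : ℤ)
        - ∑ k ∈ range (n + 1), ((r - 1 + k).choose (r - 1) : ℤ) * b (k + j + r - 1)) :=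
  ⟨fun _ hi => hpav.tcoef_of_two_le hE hr (by omega) hn hi,
    hpav.tcoef_one_zero hE hr h2 hn hb,
    fun _ hj => hpav.tcoef_one_of_pos hE hr h2 hn hb hj,
    fun _ hj => hpav.tcoef_zero_of_pos hE hr h2 hn hb hj⟩

end TuttePaper
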